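/- arXiv:math/0111191 — 2 statements merged into one kernel-verified Lean document; each statement's English description precedes it below -/
import Mathlib

section
/- Let t be an odd prime power and N ≥ 1. Let q₁ and q₂ be quadratic hermitian forms on E = F_{t²}^N with polar hermitian forms φ₁ and φ₂. Then q₁ and q₂ are equivalent — i.e. there exists an F_{t²}-linear automorphism u of E with q₂(x) = q₁(u(x)) for all x ∈ E — if and only if φ₁ and φ₂ have the same rank. -/
/-- `H` is a sesquilinear hermitian form on `F_{t²}^N` (conjugation is `x ↦ x^t`). -/
def IsSesquiHermitian {K : Type} [Field K] {N : ℕ} (t : ℕ)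
    (H : (Fin N → K) → (Fin N → K) → K) : Prop :=
  (∀ x x' y, H (x + x') y = H x y + H x' y) ∧
  (∀ x y y', H x (y + y') = H x y + H x y') ∧
  (∀ (c : K) (x y : Fin N → K), H (c • x) y = c ^ t * H x y) ∧
  (∀ (c : K) (x y : Fin N → K), H x (c • y) = c * H x y) ∧
  (∀ x y, H x y = H y x ^ t)

/-- The kernel `{x : ∀ y, H x y = 0}` of a sesquilinear hermitian form, as a
`F_{t²}`-subspace. -/
def hermKer {K : Type} [Field K] {N : ℕ} (t : ℕ)
    (H : (Fin N → K) → (Fin N → K) → K) (hH : IsSesquiHermitian t H) :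
    Submodule K (Fin N → K) where
  carrier := {x | ∀ y, H x y = 0}
  add_mem' := by
    intro a b ha hb y
    rw [hH.1 a b y, ha y, hb y, add_zero]
  zero_mem' := by
    intro y
    have h := hH.1 0 0 y
    rw [add_zero] at h
    exact (left_eq_add.mp h)
  smul_mem' := by
    intro c x hx y
    rw [hH.2.2.1 c x y, hx y, mul_zero]

open Module

/-!
For odd `t`, the cyclicity of `F_{t²}^×` yields `λ` with `λ^(t-1) = -1`, i.e. `λ^t = -λ`, and shows
that the norm `c ↦ c^(t+1)` maps `F_{t²}^×` onto `F_t^×`. Using `λ` and `2 ≠ 0`, polarization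
recovers a hermitian form from its quadratic form. Using the norm, any `x` with `q(x) ≠ 0` can be
rescaled to `q(x) = 1`; splitting off its orthogonal complement repeatedly gives a basis,
orthogonal for the form, on which `q` takes only the values `0` and `1`, and whose vectors with
`q = 0` span the kernel. Two forms of the same rank thus have such bases with equally many zeros,
and the linear map matching them is an equivalence. Conversely, by polarization an equivalence of
quadratic forms preserves the polar forms, hence maps one kernel onto the other.
-/

theorem IsCyclic.exists_pow_eq_of_pow_eq_one {G : Type*} [CommGroup G] [IsCyclic G] [Finite G]
    {a b : ℕ} (hab : Nat.card G = a * b) {x : G} (hx : x ^ b = 1) : ∃ y : G, y ^ a = x := by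
  have ha : a ≠ 0 := by
    rintro rfl
    exact Nat.card_pos.ne' (hab.trans (zero_mul b))
  have hle : (powMonoidHom a : G →* G).range ≤ (powMonoidHom b).ker := by
    rintro _ ⟨y, rfl⟩
    simp [← pow_mul, ← hab, pow_card_eq_one']
  have hcard :
      Nat.card (powMonoidHom b : G →* G).ker ≤ Nat.card (powMonoidHom a : G →* G).range := by
    rw [IsCyclic.card_powMonoidHom_ker, IsCyclic.card_powMonoidHom_range, hab,
      Nat.gcd_mul_left_left, Nat.gcd_mul_right_left,
      Nat.mul_div_cancel_left _ (Nat.pos_of_ne_zero ha)]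
  exact (Subgroup.eq_of_le_of_card_ge hle hcard).ge hx

theorem Equiv.Perm.exists_apply_iff_of_card_eq {ι : Type*} [Finite ι] {p q : ι → Prop}
    (h : Nat.card {i // p i} = Nat.card {i // q i}) : ∃ σ : Equiv.Perm ι, ∀ i, q (σ i) ↔ p i := by
  classical
  have := Fintype.ofFinite ι
  have hc : Nat.card {i // ¬p i} = Nat.card {i // ¬q i} := by
    simp only [Nat.card_eq_fintype_card, Fintype.card_subtype_compl] at h ⊢
    rw [h]
  obtain ⟨e⟩ := Finite.card_eq.mp h
  obtain ⟨f⟩ := Finite.card_eq.mp hc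
  refine ⟨e.subtypeCongr f, fun i => ?_⟩
  by_cases hi : p i
  · simp [Equiv.subtypeCongr, hi, (e ⟨i, hi⟩).2]
  · simp [Equiv.subtypeCongr, hi, (f ⟨i, hi⟩).2]

theorem Submodule.finrank_inf_ker_add_one {K V : Type*} [DivisionRing K] [AddCommGroup V]
    [Module K V] [FiniteDimensional K V] (W : Submodule K V) (f : V →ₗ[K] K) {v : V}
    (hv : v ∈ W) (hfv : f v ≠ 0) : finrank K ↥(W ⊓ LinearMap.ker f) + 1 = finrank K W := by
  have hf : f.domRestrict W ≠ 0 := fun h => hfv (by simpa using LinearMap.congr_fun h ⟨v, hv⟩)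
  rw [← Submodule.map_comap_subtype, Submodule.finrank_map_subtype_eq, ← LinearMap.ker_domRestrict]
  exact Module.Dual.finrank_ker_add_one_of_ne_zero hf

namespace FiniteField

variable {K : Type*} [Field K] [Fintype K] {t : ℕ}

theorem nat_card_units_of_card_eq_sq (hK : Fintype.card K = t ^ 2) :
    Nat.card Kˣ = (t + 1) * (t - 1) := by
  rw [Nat.card_units, Nat.card_eq_fintype_card, hK, ← Nat.sq_sub_sq, one_pow]

theorem two_ne_zero_of_card_eq_sq (hK : Fintype.card K = t ^ 2) (ht : Odd t) : (2 : K) ≠ 0 :=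
  Ring.two_ne_zero fun h => by
    have := even_card_iff_char_two.mp h
    rw [hK] at this
    exact Nat.not_even_iff_odd.mpr ht.pow (Nat.even_iff.mpr this)

theorem exists_ne_zero_pow_eq_neg (hK : Fintype.card K = t ^ 2) (ht : Odd t) :
    ∃ lam : K, lam ≠ 0 ∧ lam ^ t = -lam := by
  obtain ⟨y, hy⟩ := IsCyclic.exists_pow_eq_of_pow_eq_one (x := (-1 : Kˣ))
    (by rw [nat_card_units_of_card_eq_sq hK, mul_comm]) ht.add_one.neg_one_pow
  refine ⟨y, y.ne_zero, ?_⟩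
  rw [← pow_sub_one_mul ht.pos.ne', ← Units.val_pow_eq_pow_val, hy]
  simp

theorem exists_pow_succ_eq (hK : Fintype.card K = t ^ 2) {a : K} (ha : a ≠ 0) (hat : a ^ t = a) :
    ∃ c : K, c ^ (t + 1) = a := by
  have ht : 1 ≤ t := by
    by_contra! h
    simpa [Nat.lt_one_iff.mp h, hK] using Fintype.one_lt_card (α := K)
  have hat' : Units.mk0 a ha ^ (t - 1) = 1 := Units.ext <| mul_left_cancel₀ ha <| by
    rw [Units.val_pow_eq_pow_val, Units.val_mk0, Units.val_one, mul_one, ← pow_succ',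
      Nat.sub_add_cancel ht, hat]
  obtain ⟨c, hc⟩ := IsCyclic.exists_pow_eq_of_pow_eq_one (nat_card_units_of_card_eq_sq hK) hat'
  exact ⟨c, by simpa using congrArg Units.val hc⟩

end FiniteField

namespace IsSesquiHermitian

variable {K : Type} [Field K] {t N : ℕ} {H H' : (Fin N → K) → (Fin N → K) → K}

theorem add_left (hH : IsSesquiHermitian t H) (x x' y : Fin N → K) :
    H (x + x') y = H x y + H x' y := hH.1 x x' y

theorem add_right (hH : IsSesquiHermitian t H) (x y y' : Fin N → K) :
    H x (y + y') = H x y + H x y' := hH.2.1 x y y'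

theorem smul_left (hH : IsSesquiHermitian t H) (c : K) (x y : Fin N → K) :
    H (c • x) y = c ^ t * H x y := hH.2.2.1 c x y

theorem smul_right (hH : IsSesquiHermitian t H) (c : K) (x y : Fin N → K) :
    H x (c • y) = c * H x y := hH.2.2.2.1 c x y

theorem conj_symm (hH : IsSesquiHermitian t H) (x y : Fin N → K) : H x y = H y x ^ t :=
  hH.2.2.2.2 x y

theorem apply_self_pow (hH : IsSesquiHermitian t H) (x : Fin N → K) : H x x ^ t = H x x :=
  (hH.conj_symm x x).symm

def toLinearMap (hH : IsSesquiHermitian t H) (x : Fin N → K) : (Fin N → K) →ₗ[K] K where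
  toFun := H x
  map_add' := hH.add_right x
  map_smul' c := hH.smul_right c x

theorem comp_linearMap (hH : IsSesquiHermitian t H) (u : (Fin N → K) →ₗ[K] (Fin N → K)) :
    IsSesquiHermitian t (fun x y => H (u x) (u y)) :=
  ⟨fun x x' y => by simp only [map_add, hH.add_left],
    fun x y y' => by simp only [map_add, hH.add_right],
    fun c x y => by simp only [map_smul, hH.smul_left],
    fun c x y => by simp only [map_smul, hH.smul_right],
    fun x y => hH.conj_symm (u x) (u y)⟩

section Polarization

variable {lam : K} (h2 : (2 : K) ≠ 0) (hlam0 : lam ≠ 0) (hlam : lam ^ t = -lam)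
include hlam

theorem polarization (hH : IsSesquiHermitian t H) (x y : Fin N → K) :
    2 * lam * H x y = lam * (H (x + y) (x + y) - H x x - H y y)
      + (H (x + lam • y) (x + lam • y) - H x x + lam ^ 2 * H y y) := by
  simp only [hH.add_left, hH.add_right, hH.smul_left, hH.smul_right, hlam]
  ring

include h2 hlam0

theorem apply_eq_of_apply_self_eq (hH : IsSesquiHermitian t H) (hH' : IsSesquiHermitian t H')
    (h : ∀ x, H x x = H' x x) (x y : Fin N → K) : H x y = H' x y :=
  mul_left_cancel₀ (mul_ne_zero h2 hlam0) <| by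
    simp only [hH.polarization hlam, hH'.polarization hlam, h]

theorem apply_eq_zero_of_apply_self_eq_zero (hH : IsSesquiHermitian t H)
    {W : Submodule K (Fin N → K)} (h : ∀ x ∈ W, H x x = 0) {x y : Fin N → K} (hx : x ∈ W)
    (hy : y ∈ W) : H x y = 0 :=
  mul_left_cancel₀ (mul_ne_zero h2 hlam0) <| by
    rw [hH.polarization hlam, h x hx, h y hy, h _ (W.add_mem hx hy),
      h _ (W.add_mem hx (W.smul_mem lam hy))]
    ring

end Polarization

section OrthogonalBasis

variable {ι : Type*} [Fintype ι] (hH : IsSesquiHermitian t H) (b : Basis ι K (Fin N → K))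
  (hb : Pairwise fun i j => H (b i) (b j) = 0)
include hH hb

theorem apply_basis_left (i : ι) (x : Fin N → K) : H (b i) x = b.repr x i * H (b i) (b i) := by
  change hH.toLinearMap (b i) x = _
  conv_lhs => rw [← b.sum_repr x]
  rw [map_sum, Finset.sum_eq_single i (fun j _ hji => ?_) (by simp)] <;>
    simp only [map_smul, smul_eq_mul, toLinearMap, LinearMap.coe_mk, AddHom.coe_mk]
  rw [hb hji.symm, mul_zero]

theorem apply_basis_right (x : Fin N → K) (i : ι) :
    H x (b i) = b.repr x i ^ t * H (b i) (b i) := by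
  rw [hH.conj_symm, hH.apply_basis_left b hb, mul_pow, hH.apply_self_pow]

theorem apply_eq_sum (x y : Fin N → K) :
    H x y = ∑ i, b.repr x i ^ t * b.repr y i * H (b i) (b i) := by
  change hH.toLinearMap x y = _
  conv_lhs => rw [← b.sum_repr y]
  rw [map_sum]
  refine Finset.sum_congr rfl fun i _ => ?_
  rw [map_smul, smul_eq_mul]
  change _ * H x (b i) = _
  rw [hH.apply_basis_right b hb]
  ring

end OrthogonalBasis

end IsSesquiHermitian

section Kernel

variable {K : Type} [Field K] {t N : ℕ} {H H' : (Fin N → K) → (Fin N → K) → K}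

theorem hermKer_eq_span (ht : t ≠ 0) (hH : IsSesquiHermitian t H) {ι : Type*} [Fintype ι]
    (b : Basis ι K (Fin N → K)) (hb : Pairwise fun i j => H (b i) (b j) = 0) :
    hermKer t H hH = Submodule.span K (Set.range fun i : {i // H (b i) (b i) = 0} => b i) := by
  apply le_antisymm
  · intro x hx
    rw [← b.sum_repr x]
    refine Submodule.sum_mem _ fun i _ => ?_
    by_cases hi : H (b i) (b i) = 0
    · exact Submodule.smul_mem _ _ (Submodule.subset_span ⟨⟨i, hi⟩, rfl⟩)
    · have hxi : b.repr x i ^ t * H (b i) (b i) = 0 :=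
        (hH.apply_basis_right b hb x i).symm.trans (hx (b i))
      rw [pow_eq_zero_iff ht |>.mp ((mul_eq_zero.mp hxi).resolve_right hi), zero_smul]
      exact Submodule.zero_mem _
  · rw [Submodule.span_le]
    rintro _ ⟨i, rfl⟩ y
    rw [hH.apply_basis_left b hb, i.2, mul_zero]

theorem finrank_hermKer_eq_card (ht : t ≠ 0) (hH : IsSesquiHermitian t H) {ι : Type*} [Fintype ι]
    (b : Basis ι K (Fin N → K)) (hb : Pairwise fun i j => H (b i) (b j) = 0) :
    finrank K (hermKer t H hH) = Nat.card {i // H (b i) (b i) = 0} := by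
  classical
  rw [hermKer_eq_span ht hH b hb, Nat.card_eq_fintype_card]
  exact finrank_span_eq_card (b.linearIndependent.comp _ Subtype.val_injective)

theorem finrank_hermKer_eq_of_linearEquiv (hH : IsSesquiHermitian t H)
    (hH' : IsSesquiHermitian t H') (u : (Fin N → K) ≃ₗ[K] (Fin N → K))
    (h : ∀ x y, H' x y = H (u x) (u y)) :
    finrank K (hermKer t H' hH') = finrank K (hermKer t H hH) := by
  have hker : hermKer t H' hH' = (hermKer t H hH).comap (u : (Fin N → K) →ₗ[K] (Fin N → K)) := by
    ext x
    change (∀ y, H' x y = 0) ↔ ∀ y, H (u x) y = 0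
    simp only [h]
    exact (u.surjective.forall (p := fun y => H (u x) y = 0)).symm
  rw [hker, Submodule.comap_equiv_eq_map_symm, LinearEquiv.finrank_map_eq]

end Kernel

def IsZeroOneOrthogonal {K : Type} [Field K] {N : ℕ} {ι : Type*}
    (H : (Fin N → K) → (Fin N → K) → K) (v : ι → Fin N → K) : Prop :=
  (Pairwise fun i j => H (v i) (v j) = 0) ∧ ∀ i, H (v i) (v i) = 0 ∨ H (v i) (v i) = 1

namespace IsSesquiHermitian

variable {K : Type} [Field K] {t N : ℕ} {H : (Fin N → K) → (Fin N → K) → K}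

theorem exists_smul_apply_self_eq_one (hH : IsSesquiHermitian t H)
    (hnorm : ∀ a : K, a ≠ 0 → a ^ t = a → ∃ c : K, c ^ (t + 1) = a) {x : Fin N → K}
    (hx : H x x ≠ 0) : ∃ c : K, H (c • x) (c • x) = 1 := by
  obtain ⟨c, hc⟩ := hnorm (H x x)⁻¹ (inv_ne_zero hx) (by rw [inv_pow, hH.apply_self_pow])
  refine ⟨c, ?_⟩
  rw [hH.smul_left, hH.smul_right, ← mul_assoc, ← pow_succ, hc, inv_mul_cancel₀ hx]

theorem isZeroOneOrthogonal_cons (ht : t ≠ 0) (hH : IsSesquiHermitian t H) {n : ℕ}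
    {v₀ : Fin N → K} {v : Fin n → Fin N → K} (h₀ : H v₀ v₀ = 1) (hv₀ : ∀ i, H v₀ (v i) = 0)
    (hv : IsZeroOneOrthogonal H v) :
    IsZeroOneOrthogonal H (Fin.cons v₀ v : Fin (n + 1) → Fin N → K) := by
  have hv₀' : ∀ i, H (v i) v₀ = 0 := fun i => by rw [hH.conj_symm, hv₀, zero_pow ht]
  refine ⟨fun i j hij => ?_, Fin.cases (Or.inr h₀) hv.2⟩
  cases i using Fin.cases <;> cases j using Fin.cases
  · exact absurd rfl hij
  · exact hv₀ _
  · exact hv₀' _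
  · exact hv.1 fun h => hij (congrArg Fin.succ h)

variable {lam : K} (h2 : (2 : K) ≠ 0) (hlam0 : lam ≠ 0) (hlam : lam ^ t = -lam)
include h2 hlam0 hlam

theorem exists_isZeroOneOrthogonal_of_apply_self_eq_zero (hH : IsSesquiHermitian t H) {n : ℕ}
    {W : Submodule K (Fin N → K)} (hW : finrank K W = n) (h : ∀ x ∈ W, H x x = 0) :
    ∃ v : Fin n → Fin N → K, LinearIndependent K v ∧ (∀ i, v i ∈ W) ∧ IsZeroOneOrthogonal H v := by
  let w := finBasisOfFinrankEq K W hW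
  refine ⟨fun i => w i, w.linearIndependent.map' W.subtype W.ker_subtype, fun i => (w i).2,
    fun i j _ => hH.apply_eq_zero_of_apply_self_eq_zero h2 hlam0 hlam h (w i).2 (w j).2,
    fun i => Or.inl (h _ (w i).2)⟩

theorem exists_isZeroOneOrthogonal (ht : t ≠ 0) (hH : IsSesquiHermitian t H)
    (hnorm : ∀ a : K, a ≠ 0 → a ^ t = a → ∃ c : K, c ^ (t + 1) = a) {n : ℕ}
    (W : Submodule K (Fin N → K)) (hW : finrank K W = n) :
    ∃ v : Fin n → Fin N → K, LinearIndependent K v ∧ (∀ i, v i ∈ W) ∧ IsZeroOneOrthogonal H v := by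
  induction n generalizing W with
  | zero =>
    exact ⟨Fin.elim0, linearIndependent_empty_type, Fin.rec0, fun i => i.elim0, Fin.rec0⟩
  | succ n ih =>
    by_cases hW0 : ∀ x ∈ W, H x x = 0
    · exact hH.exists_isZeroOneOrthogonal_of_apply_self_eq_zero h2 hlam0 hlam hW hW0
    obtain ⟨x, hxW, hx⟩ : ∃ x ∈ W, H x x ≠ 0 := by simpa using hW0
    obtain ⟨c, hc⟩ := hH.exists_smul_apply_self_eq_one hnorm hx
    set f := hH.toLinearMap (c • x)
    have hfc : f (c • x) ≠ 0 := fun h => one_ne_zero (hc.symm.trans h)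
    obtain ⟨v, hv_li, hvW, hv⟩ := ih (W ⊓ LinearMap.ker f)
      (by have := W.finrank_inf_ker_add_one f (W.smul_mem c hxW) hfc; omega)
    have hspan : Submodule.span K (Set.range v) ≤ LinearMap.ker f :=
      Submodule.span_le.mpr (Set.range_subset_iff.mpr fun i => (hvW i).2)
    refine ⟨Fin.cons (c • x) v, hv_li.finCons fun hmem => hfc (hspan hmem),
      Fin.cases (W.smul_mem c hxW) fun i => (hvW i).1,
      hH.isZeroOneOrthogonal_cons ht hc (fun i => (hvW i).2) hv⟩

theorem exists_basis_isZeroOneOrthogonal (ht : t ≠ 0) (hH : IsSesquiHermitian t H)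
    (hnorm : ∀ a : K, a ≠ 0 → a ^ t = a → ∃ c : K, c ^ (t + 1) = a) :
    ∃ b : Basis (Fin N) K (Fin N → K), IsZeroOneOrthogonal H b := by
  obtain ⟨v, hv_li, -, hv⟩ :=
    hH.exists_isZeroOneOrthogonal h2 hlam0 hlam ht hnorm (n := N) ⊤ (by simp)
  refine ⟨basisOfLinearIndependentOfCardEqFinrank' v hv_li (by simp), ?_⟩
  rwa [coe_basisOfLinearIndependentOfCardEqFinrank']

end IsSesquiHermitian

theorem exists_linearEquiv_of_card_eq {K : Type} [Field K] {t N : ℕ}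
    {H₁ H₂ : (Fin N → K) → (Fin N → K) → K} (hH₁ : IsSesquiHermitian t H₁)
    (hH₂ : IsSesquiHermitian t H₂) (b₁ b₂ : Basis (Fin N) K (Fin N → K))
    (hb₁ : IsZeroOneOrthogonal H₁ b₁) (hb₂ : IsZeroOneOrthogonal H₂ b₂)
    (h : Nat.card {i // H₂ (b₂ i) (b₂ i) = 0} = Nat.card {i // H₁ (b₁ i) (b₁ i) = 0}) :
    ∃ u : (Fin N → K) ≃ₗ[K] (Fin N → K), ∀ x y, H₂ x y = H₁ (u x) (u y) := by
  obtain ⟨σ, hσ⟩ := Equiv.Perm.exists_apply_iff_of_card_eq h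
  have hdiag : ∀ i, H₂ (b₂ i) (b₂ i) = H₁ (b₁ (σ i)) (b₁ (σ i)) := fun i => by
    have := hσ i
    rcases hb₁.2 (σ i) with h₁ | h₁ <;> rcases hb₂.2 i with h₂ | h₂ <;> simp [h₁, h₂] at this ⊢
  let u := b₂.equiv b₁ σ
  have hu : ∀ i, u (b₂ i) = b₁ (σ i) := fun i => b₂.equiv_apply i b₁ σ
  have hG := hH₁.comp_linearMap u.toLinearMap
  have hG_orth : Pairwise fun i j => H₁ (u (b₂ i)) (u (b₂ j)) = 0 := fun i j hij => by
    simpa only [hu] using hb₁.1 (σ.injective.ne hij)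
  refine ⟨u, fun x y => ?_⟩
  rw [hH₂.apply_eq_sum b₂ hb₂.1]
  refine Eq.trans ?_ (hG.apply_eq_sum b₂ hG_orth x y).symm
  simp only [hdiag, LinearEquiv.coe_coe, hu]

theorem stmt_9_general (p k t N : ℕ) (hp : p.Prime) (hpodd : p ≠ 2) (ht : t = p ^ k)
    (K : Type) [Field K] [Fintype K] (hcK : Fintype.card K = t ^ 2)
    (H₁ H₂ : (Fin N → K) → (Fin N → K) → K)
    (hH₁ : IsSesquiHermitian t H₁) (hH₂ : IsSesquiHermitian t H₂) :
    (∃ u : (Fin N → K) ≃ₗ[K] (Fin N → K), ∀ x, H₂ x x = H₁ (u x) (u x)) ↔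
    N - Module.finrank K (hermKer t H₁ hH₁) =
      N - Module.finrank K (hermKer t H₂ hH₂) := by
  have htodd : Odd t := ht ▸ (hp.odd_of_ne_two hpodd).pow
  have ht0 : t ≠ 0 := htodd.pos.ne'
  have h2 := FiniteField.two_ne_zero_of_card_eq_sq hcK htodd
  obtain ⟨lam, hlam0, hlam⟩ := FiniteField.exists_ne_zero_pow_eq_neg hcK htodd
  have hnorm : ∀ a : K, a ≠ 0 → a ^ t = a → ∃ c : K, c ^ (t + 1) = a :=
    fun _ => FiniteField.exists_pow_succ_eq hcK
  constructor
  · rintro ⟨u, hu⟩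
    have hH₁u := hH₁.comp_linearMap u.toLinearMap
    rw [finrank_hermKer_eq_of_linearEquiv hH₁ hH₂ u
      (hH₂.apply_eq_of_apply_self_eq h2 hlam0 hlam hH₁u hu)]
  · intro hrank
    obtain ⟨b₁, hb₁⟩ := hH₁.exists_basis_isZeroOneOrthogonal h2 hlam0 hlam ht0 hnorm
    obtain ⟨b₂, hb₂⟩ := hH₂.exists_basis_isZeroOneOrthogonal h2 hlam0 hlam ht0 hnorm
    have hle₁ := (hermKer t H₁ hH₁).finrank_le
    have hle₂ := (hermKer t H₂ hH₂).finrank_le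
    rw [finrank_fin_fun] at hle₁ hle₂
    obtain ⟨u, hu⟩ := exists_linearEquiv_of_card_eq hH₁ hH₂ b₁ b₂ hb₁ hb₂ <| by
      rw [← finrank_hermKer_eq_card ht0 hH₁ b₁ hb₁.1, ← finrank_hermKer_eq_card ht0 hH₂ b₂ hb₂.1]
      omega
    exact ⟨u, fun x => hu x x⟩

/-- Two quadratic hermitian forms `q₁, q₂` on `F_{t²}^N` (with polar hermitian forms
`H₁, H₂`) are equivalent — there is a linear automorphism `u` with `q₂ = q₁ ∘ u` —
if and only if their polar forms have the same rank. -/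
theorem stmt_9 (p k t N : ℕ) (hp : p.Prime) (hpodd : p ≠ 2) (hk : k ≠ 0) (ht : t = p ^ k)
    (hN : 1 ≤ N) (K : Type) [Field K] [Fintype K] (hcK : Fintype.card K = t ^ 2)
    (H₁ H₂ : (Fin N → K) → (Fin N → K) → K)
    (hH₁ : IsSesquiHermitian t H₁) (hH₂ : IsSesquiHermitian t H₂) :
    (∃ u : (Fin N → K) ≃ₗ[K] (Fin N → K), ∀ x, H₂ x x = H₁ (u x) (u x)) ↔
    N - Module.finrank K (hermKer t H₁ hH₁) =
      N - Module.finrank K (hermKer t H₂ hH₂) :=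
  stmt_9_general p k t N hp hpodd ht K hcK H₁ H₂ hH₁ hH₂
end

section
/- Let t be an odd prime power, N ≥ 1, H a sesquilinear hermitian form on F_{t²}^N, ι : F_t^{2N} → F_{t²}^N as below, f(x) = H(ιx, ιx), and B(x,y) = f(x+y) − f(x) − f(y). Then ι(Ker B) = Ker H; in particular ι induces an F_t-isomorphism from Ker B onto Ker H, and rk f = rk B = 2 · rk H. -/
/-- The `F_t`-isomorphism `ι : F_t^{2N} → F_{t²}^N`,
`ι(x₁,…,x₂ₙ) = (x₁ + α x₂, …, x₂ₙ₋₁ + α x₂ₙ)`. -/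
def iota (N : ℕ) (F K : Type) [Field F] [Field K] [Algebra F K] (α : K)
    (x : Fin (2 * N) → F) : Fin N → K :=
  fun i => algebraMap F K (x ⟨2 * i.1, by have := i.isLt; omega⟩) +
    algebraMap F K (x ⟨2 * i.1 + 1, by have := i.isLt; omega⟩) * α


open Module

section FieldFacts

variable {F K : Type*} [Field F] [Field K] [Algebra F K]

theorem finrank_eq_of_card_eq_pow [Fintype F] [Fintype K] {n : ℕ}
    (h : Fintype.card K = Fintype.card F ^ n) : finrank F K = n :=
  Nat.pow_right_injective (Nat.succ_le_of_lt Fintype.one_lt_card)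
    ((card_eq_pow_finrank (K := F) (V := K)).symm.trans h)

theorem not_mem_range_algebraMap_of_adjoin_eq_top {α : K}
    (hα : Algebra.adjoin F {α} = ⊤) (hK : finrank F K ≠ 1) :
    α ∉ Set.range (algebraMap F K) := by
  rintro hα_mem
  have hbot : Algebra.adjoin F {α} ≤ ⊥ :=
    Algebra.adjoin_le (by simpa [Algebra.mem_bot] using hα_mem)
  rw [hα] at hbot
  exact hK (Subalgebra.bot_eq_top_iff_finrank_eq_one.mp (le_antisymm le_top hbot))

theorem mem_range_algebraMap_of_pow_card_eq_self {x : K} (hx : IsIntegral F x)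
    (h : x ^ Nat.card F = x) : x ∈ Set.range (algebraMap F K) := by
  have hdvd : minpoly F x ∣ Polynomial.X ^ (Nat.card F) ^ 1 - Polynomial.X :=
    minpoly.dvd F x (by simp [h])
  exact minpoly.natDegree_eq_one_iff.mp <| Nat.dvd_one.mp <|
    (minpoly.irreducible hx).natDegree_dvd_of_dvd_X_pow_card_pow_sub_X hdvd

theorem finrank_comap_restrictScalars {M E : Type*} [AddCommGroup M] [Module F M]
    [AddCommGroup E] [Module K E] [Module F E] [IsScalarTower F K E]
    (e : M ≃ₗ[F] E) (V : Submodule K E) :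
    finrank F ((V.restrictScalars F).comap e.toLinearMap) = finrank F K * finrank K V := by
  rw [Submodule.comap_equiv_eq_map_symm, LinearEquiv.finrank_map_eq]
  exact (finrank_mul_finrank F K V).symm

end FieldFacts

section Iota

variable (N : ℕ) {F K : Type} [Field F] [Field K] [Algebra F K] {α : K}

theorem eq_zero_of_algebraMap_add_algebraMap_mul_eq_zero
    (hα : α ∉ Set.range (algebraMap F K)) {a b : F}
    (h : algebraMap F K a + algebraMap F K b * α = 0) : a = 0 ∧ b = 0 := by
  have hb : b = 0 := by
    by_contra hb
    refine hα ⟨-a / b, ?_⟩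
    rw [map_div₀, map_neg, div_eq_iff (by simpa using hb)]
    linear_combination -h
  subst hb
  simpa using h

theorem Fin.exists_eq_two_mul_or_two_mul_add_one (j : Fin (2 * N)) :
    ∃ (i : ℕ) (hi : 2 * i + 1 < 2 * N),
      j = ⟨2 * i, by omega⟩ ∨ j = ⟨2 * i + 1, hi⟩ := by
  refine ⟨j / 2, by omega, ?_⟩
  rcases Nat.even_or_odd j.1 with ⟨m, hm⟩ | ⟨m, hm⟩
  · left; ext; simp only; omega
  · right; ext; simp only; omega

variable (F K α) in
def iotaLinearMap : (Fin (2 * N) → F) →ₗ[F] (Fin N → K) where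
  toFun := iota N F K α
  map_add' x y := by
    funext i
    simp only [iota, Pi.add_apply, map_add]
    ring
  map_smul' c x := by
    funext i
    simp only [iota, Pi.smul_apply, smul_eq_mul, map_mul, Algebra.smul_def, RingHom.id_apply]
    ring

theorem iota_injective (hα : α ∉ Set.range (algebraMap F K)) :
    Function.Injective (iotaLinearMap N F K α) := by
  refine (injective_iff_map_eq_zero _).mpr fun x hx => funext fun j => ?_
  obtain ⟨i, hi, rfl | rfl⟩ := Fin.exists_eq_two_mul_or_two_mul_add_one N j
  all_goals
    have h := eq_zero_of_algebraMap_add_algebraMap_mul_eq_zero hα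
      (congrFun hx ⟨i, by omega⟩)
    simp [h]

noncomputable def iotaEquiv (hα : α ∉ Set.range (algebraMap F K))
    (hK : finrank F K = 2) [FiniteDimensional F K] :
    (Fin (2 * N) → F) ≃ₗ[F] (Fin N → K) :=
  (iotaLinearMap N F K α).linearEquivOfInjective (iota_injective N hα)
    (by simp [finrank_pi_fintype, hK, mul_comm])

end Iota

theorem eq_zero_of_add_pow_eq_zero {K : Type*} [Field K] {t : ℕ} {c u : K} (hc : c ^ t ≠ c)
    (hu : u + u ^ t = 0) (hcu : c * u + (c * u) ^ t = 0) : u = 0 := by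
  have h : (c - c ^ t) * u = 0 := by linear_combination hcu - c ^ t * hu
  exact (mul_eq_zero.mp h).resolve_left (sub_ne_zero.mpr hc.symm)

namespace IsSesquiHermitian

variable {K : Type} [Field K] {N t : ℕ} {H : (Fin N → K) → (Fin N → K) → K}
  (hH : IsSesquiHermitian t H)
include hH

theorem zero_left (w : Fin N → K) : H 0 w = 0 := by
  simpa using hH.1 0 0 w

def ker : Submodule K (Fin N → K) where
  carrier := {z | ∀ w, H z w = 0}
  add_mem' {a b} ha hb w := by rw [hH.1, ha w, hb w, add_zero]
  zero_mem' := hH.zero_left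
  smul_mem' c z hz w := by rw [hH.2.2.1, hz w, mul_zero]

theorem mem_ker {z : Fin N → K} : z ∈ hH.ker ↔ ∀ w, H z w = 0 := Iff.rfl

theorem polar_eq (x y : Fin N → K) :
    H (x + y) (x + y) - H x x - H y y = H x y + H x y ^ t := by
  rw [hH.1, hH.2.1, hH.2.1, hH.2.2.2.2 y x]
  ring

theorem forall_add_pow_eq_zero_iff_mem_ker (ht : t ≠ 0) {c : K} (hc : c ^ t ≠ c)
    {z : Fin N → K} : (∀ w, H z w + H z w ^ t = 0) ↔ z ∈ hH.ker := by
  refine ⟨fun h w => eq_zero_of_add_pow_eq_zero hc (h w) ?_, fun h w => ?_⟩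
  · simpa [hH.2.2.2.1] using h (c • w)
  · simp [hH.mem_ker.mp h w, ht]

end IsSesquiHermitian

theorem stmt_11_general (t N : ℕ)
    (F K : Type) [Field F] [Field K] [Algebra F K] [Fintype F] [Fintype K]
    (hcF : Fintype.card F = t) (hcK : Fintype.card K = t ^ 2)
    (H : (Fin N → K) → (Fin N → K) → K) (hH : IsSesquiHermitian t H)
    (α : K) (hα : Algebra.adjoin F ({α} : Set K) = ⊤)
    (f : (Fin (2 * N) → F) → K)
    (hf : ∀ x, f x = H (iota N F K α x) (iota N F K α x))
    (B : (Fin (2 * N) → F) → (Fin (2 * N) → F) → K)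
    (hB : ∀ x y, B x y = f (x + y) - f x - f y) :
    ∃ (W : Submodule F (Fin (2 * N) → F)) (V : Submodule K (Fin N → K)),
      (∀ x, x ∈ W ↔ ∀ y, B x y = 0) ∧
      (∀ z, z ∈ V ↔ ∀ w, H z w = 0) ∧
      iota N F K α '' (W : Set (Fin (2 * N) → F)) = (V : Set (Fin N → K)) ∧
      2 * N - Module.finrank F W = 2 * (N - Module.finrank K V) := by
  have hK : finrank F K = 2 := finrank_eq_of_card_eq_pow (by rw [hcK, hcF])
  have hαF : α ∉ Set.range (algebraMap F K) :=
    not_mem_range_algebraMap_of_adjoin_eq_top hα (by omega)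
  have hαt : α ^ t ≠ α := fun h => hαF <| mem_range_algebraMap_of_pow_card_eq_self
    (.of_finite F α) (by rwa [Nat.card_eq_fintype_card, hcF])
  have ht : t ≠ 0 := hcF ▸ Fintype.card_ne_zero
  let ι := iotaEquiv N hαF hK
  have hι : ⇑ι = iota N F K α := rfl
  rw [← hι] at hf ⊢
  have hBH : ∀ x y, B x y = H (ι x) (ι y) + H (ι x) (ι y) ^ t := fun x y => by
    rw [hB, hf, hf, hf, map_add]
    exact hH.polar_eq _ _
  refine ⟨(hH.ker.restrictScalars F).comap ι.toLinearMap, hH.ker, fun x => ?_,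
    fun _ => hH.mem_ker, Set.image_preimage_eq (hH.ker : Set (Fin N → K)) ι.surjective, ?_⟩
  · simp only [Submodule.mem_comap, Submodule.restrictScalars_mem, LinearEquiv.coe_coe, hBH,
      ← hH.forall_add_pow_eq_zero_iff_mem_ker ht hαt, ι.surjective.forall]
  · have hV := hH.ker.finrank_le
    simp only [finrank_comap_restrictScalars, hK, finrank_fin_fun] at hV ⊢
    omega

/-- With `f(x) = H(ιx, ιx)` and `B(x,y) = f(x+y) − f(x) − f(y)`, one has
`ι(Ker B) = Ker H` (so `ι` induces an `F_t`-isomorphism `Ker B ≅ Ker H`) and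
`rk f = rk B = 2 · rk H`. -/
theorem stmt_11 (p k t N : ℕ) (hp : p.Prime) (hpodd : p ≠ 2) (hk : k ≠ 0) (ht : t = p ^ k)
    (hN : 1 ≤ N) (F K : Type) [Field F] [Field K] [Algebra F K] [Fintype F] [Fintype K]
    (hcF : Fintype.card F = t) (hcK : Fintype.card K = t ^ 2)
    (H : (Fin N → K) → (Fin N → K) → K) (hH : IsSesquiHermitian t H)
    (α : K) (hα : Algebra.adjoin F ({α} : Set K) = ⊤)
    (f : (Fin (2 * N) → F) → K)
    (hf : ∀ x, f x = H (iota N F K α x) (iota N F K α x))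
    (B : (Fin (2 * N) → F) → (Fin (2 * N) → F) → K)
    (hB : ∀ x y, B x y = f (x + y) - f x - f y) :
    ∃ (W : Submodule F (Fin (2 * N) → F)) (V : Submodule K (Fin N → K)),
      (∀ x, x ∈ W ↔ ∀ y, B x y = 0) ∧
      (∀ z, z ∈ V ↔ ∀ w, H z w = 0) ∧
      iota N F K α '' (W : Set (Fin (2 * N) → F)) = (V : Set (Fin N → K)) ∧
      2 * N - Module.finrank F W = 2 * (N - Module.finrank K V) :=
  stmt_11_general t N F K hcF hcK H hH α hα f hf B hB
end
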